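/- arXiv:math/0311209 — 5 statements merged into one kernel-verified Lean document; each statement's English description precedes it below -/
import Mathlib

section
/- Let U be an isometry of L²₀(𝕋^d) possessing a normalized eigenfunction h with eigenvalue λ, |λ| = 1, such that ‖(I − G_ε)h‖ ≤ K ε^β for some K, β > 0. Then the dissipation time of T_ε = G_ε U satisfies τ(ε) ≥ (1 − e^{-1})/(K ε^β); in particular dissipation is at least power-law slow. -/
/-- Let U be an isometry of L²₀ with a normalized eigenfunction h of eigenvalue λ,
|λ| = 1, and let G be a noise operator (a contraction) with `‖(I − G)h‖ ≤ K ε^β`.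
Then the dissipation time τ of `T_ε = G U` (any τ with `‖T_ε^τ‖ < e⁻¹`) satisfies
`τ ≥ (1 − e⁻¹)/(K ε^β)`: the dissipation is at least power-law slow. -/
theorem stmt12 {H : Type*} [NormedAddCommGroup H] [InnerProductSpace ℂ H]
    [CompleteSpace H]
    (U G : H →L[ℂ] H) (hU : ∀ f : H, ‖U f‖ = ‖f‖) (hG : ∀ f : H, ‖G f‖ ≤ ‖f‖)
    (h : H) (hh : ‖h‖ = 1) (lam : ℂ) (hlam : ‖lam‖ = 1) (heig : U h = lam • h)
    (K β ε : ℝ) (hK : 0 < K) (hβ : 0 < β) (hε : 0 < ε)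
    (hGh : ‖h - G h‖ ≤ K * ε ^ β)
    (τ : ℕ) (hτ : ‖(G.comp U) ^ τ‖ < Real.exp (-1)) :
    (1 - Real.exp (-1)) / (K * ε ^ β) ≤ τ := by
  set T := G.comp U with hT
  set δ := K * ε ^ β with hδ
  have hδpos : 0 < δ := mul_pos hK (Real.rpow_pos_of_pos hε β |> fun _ => by positivity)
  have hTle : ∀ x : H, ‖T x‖ ≤ ‖x‖ := by
    intro x
    calc ‖T x‖ = ‖G (U x)‖ := rfl
    _ ≤ ‖U x‖ := hG _
    _ = ‖x‖ := hU _
  have hstep : ‖T h - lam • h‖ ≤ δ := by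
    have : T h = lam • G h := by
      simp [hT, ContinuousLinearMap.comp_apply, heig, map_smul]
    rw [this]
    calc ‖lam • G h - lam • h‖ = ‖lam • (G h - h)‖ := by rw [smul_sub]
    _ = ‖lam‖ * ‖G h - h‖ := norm_smul _ _
    _ = ‖h - G h‖ := by rw [hlam, one_mul, norm_sub_rev]
    _ ≤ δ := hGh
  have key : ∀ n : ℕ, ‖(T ^ n) h - lam ^ n • h‖ ≤ n * δ := by
    intro n
    induction n with
    | zero => simp
    | succ n ih =>
      have e1 : (T ^ (n+1)) h - lam ^ (n+1) • h
          = T ((T ^ n) h - lam ^ n • h) + lam ^ n • (T h - lam • h) := by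
        rw [pow_succ', ContinuousLinearMap.mul_apply, map_sub, map_smul, smul_sub,
          smul_smul, ← pow_succ]
        abel
      rw [e1]
      calc ‖T ((T ^ n) h - lam ^ n • h) + lam ^ n • (T h - lam • h)‖
          ≤ ‖T ((T ^ n) h - lam ^ n • h)‖ + ‖lam ^ n • (T h - lam • h)‖ := norm_add_le _ _
        _ ≤ ‖(T ^ n) h - lam ^ n • h‖ + ‖lam ^ n‖ * ‖T h - lam • h‖ := by
            gcongr; exacts [hTle _, le_of_eq (norm_smul _ _)]
        _ ≤ n * δ + 1 * δ := by
            have : ‖lam ^ n‖ = 1 := by rw [norm_pow, hlam, one_pow]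
            rw [this]; gcongr
        _ = (n + 1 : ℕ) * δ := by push_cast; ring
  have hτh : ‖(T ^ τ) h‖ < Real.exp (-1) := by
    calc ‖(T ^ τ) h‖ ≤ ‖T ^ τ‖ * ‖h‖ := (T ^ τ).le_opNorm h
    _ = ‖T ^ τ‖ := by rw [hh, mul_one]
    _ < Real.exp (-1) := hτ
  have hlow : 1 - (τ : ℝ) * δ ≤ ‖(T ^ τ) h‖ := by
    have h1 : ‖lam ^ τ • h‖ = 1 := by
      rw [norm_smul, norm_pow, hlam, one_pow, hh, mul_one]
    have := norm_sub_norm_le (lam ^ τ • h) ((T ^ τ) h)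
    rw [h1, norm_sub_rev] at this
    linarith [key τ]
  rw [div_le_iff₀ hδpos]
  nlinarith [hτh, hlow]
end

section
/- Let F be a measure-preserving C¹ map of 𝕋^d, U_F f = f∘F the Koopman operator, G_ε a noise operator satisfying ‖G_ε f − f‖ ≤ C ε^β ‖∇f‖_∞ for C¹ functions f, and suppose ‖∇(G_ε f)‖_∞ ≤ ‖∇f‖_∞. Then for every f ∈ C¹₀(𝕋^d) with ‖f‖_{L²} = 1, ‖(G_ε U_F)^n f‖ ≥ 1 − C ε^β ‖∇f‖_∞ Σ_{m=1}^n ‖DF‖_∞^m for all n ∈ ℕ. -/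
/-!
Each application of `G ∘ U_F` loses at most `c ‖∇h‖_∞` in `L^p` norm (gradient bounds being
Lipschitz constants), because `U_F` is an `L^p` isometry and `‖G g - g‖ ≤ c ‖∇g‖_∞`. Along the
orbit the gradient bound of the `m`-th iterate is `N L^m`, since composing with `F` multiplies it
by `L` and `G` does not increase it; summing the losses gives the theorem.
-/

open MeasureTheory
open scoped NNReal

noncomputable section

/-- The d-dimensional torus 𝕋^d. -/
abbrev Torus (d : ℕ) := Fin d → AddCircle (1 : ℝ)

theorem MeasureTheory.toReal_eLpNorm_le_toReal_eLpNorm_sub_add {α E : Type*} [MeasurableSpace α]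
    [NormedAddCommGroup E] {μ : Measure α} {p : ENNReal} {f g : α → E}
    (hf : MemLp f p μ) (hg : MemLp g p μ) (hp : 1 ≤ p) :
    (eLpNorm f p μ).toReal ≤ (eLpNorm (g - f) p μ).toReal + (eLpNorm g p μ).toReal := by
  have hgf : MemLp (g - f) p μ := hg.sub hf
  have htri : eLpNorm f p μ ≤ eLpNorm g p μ + eLpNorm (g - f) p μ := by
    simpa using eLpNorm_sub_le hg.aestronglyMeasurable hgf.aestronglyMeasurable hp
  rw [← ENNReal.toReal_add hgf.eLpNorm_ne_top hg.eLpNorm_ne_top, add_comm]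
  exact ENNReal.toReal_mono (ENNReal.add_ne_top.2 ⟨hg.eLpNorm_ne_top, hgf.eLpNorm_ne_top⟩) htri

/-- `G_ε U_F` in the paper's notation, `U_F` being the Koopman operator of `F`. -/
def noisyKoopman {X E : Type*} (G : (X → E) → (X → E)) (F : X → X) (h : X → E) : X → E :=
  G (h ∘ F)

theorem lipschitzWith_iterate_noisyKoopman {X E : Type*} [PseudoEMetricSpace X]
    [PseudoEMetricSpace E] {F : X → X} {G : (X → E) → (X → E)} {L K : ℝ≥0}
    (hFL : LipschitzWith L F) (hGlip : ∀ h K, LipschitzWith K h → LipschitzWith K (G h))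
    {h : X → E} (hK : LipschitzWith K h) (n : ℕ) :
    LipschitzWith (K * L ^ n) ((noisyKoopman G F)^[n] h) := by
  induction n with
  | zero => simpa using hK
  | succ n ih =>
    rw [Function.iterate_succ_apply', pow_succ, ← mul_assoc]
    exact hGlip _ _ (ih.comp hFL)

section NoisyKoopman

variable {X E : Type*} [PseudoMetricSpace X] [CompactSpace X] [MeasurableSpace X]
  [OpensMeasurableSpace X] [NormedAddCommGroup E] {μ : Measure X} [IsFiniteMeasureOnCompacts μ]
  {F : X → X} {G : (X → E) → (X → E)} {L K : ℝ≥0} {p : ENNReal} {c : ℝ}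

theorem toReal_eLpNorm_sub_le_noisyKoopman
    (hp : 1 ≤ p) (hF : MeasurePreserving F μ μ) (hFL : LipschitzWith L F)
    (hGnoise : ∀ h K, LipschitzWith K h → (eLpNorm (G h - h) p μ).toReal ≤ c * K)
    (hGlip : ∀ h K, LipschitzWith K h → LipschitzWith K (G h))
    {h : X → E} (hK : LipschitzWith K h) :
    (eLpNorm h p μ).toReal - c * (K * L) ≤ (eLpNorm (noisyKoopman G F h) p μ).toReal := by
  have hKF : LipschitzWith (K * L) (h ∘ F) := hK.comp hFL
  have hmemLp : ∀ {K : ℝ≥0} {g : X → E}, LipschitzWith K g → MemLp g p μ := fun hg =>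
    hg.continuous.memLp_of_hasCompactSupport (HasCompactSupport.of_compactSpace _)
  have hisometry : eLpNorm (h ∘ F) p μ = eLpNorm h p μ :=
    eLpNorm_comp_measurePreserving hK.continuous.aestronglyMeasurable hF
  have hnoise := hGnoise _ _ hKF
  have htri := toReal_eLpNorm_le_toReal_eLpNorm_sub_add (hmemLp hKF)
    (hmemLp (hGlip _ _ hKF)) hp
  rw [hisometry] at htri
  push_cast at hnoise
  unfold noisyKoopman
  linarith

theorem toReal_eLpNorm_iterate_noisyKoopman_ge
    (hp : 1 ≤ p) (hF : MeasurePreserving F μ μ) (hFL : LipschitzWith L F)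
    (hGnoise : ∀ h K, LipschitzWith K h → (eLpNorm (G h - h) p μ).toReal ≤ c * K)
    (hGlip : ∀ h K, LipschitzWith K h → LipschitzWith K (G h))
    {h : X → E} (hK : LipschitzWith K h) (n : ℕ) :
    (eLpNorm h p μ).toReal - c * K * ∑ m ∈ Finset.Icc 1 n, (L : ℝ) ^ m ≤
      (eLpNorm ((noisyKoopman G F)^[n] h) p μ).toReal := by
  induction n with
  | zero => simp
  | succ n ih =>
    have hstep := toReal_eLpNorm_sub_le_noisyKoopman hp hF hFL hGnoise hGlip
      (lipschitzWith_iterate_noisyKoopman hFL hGlip hK n)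
    rw [← Function.iterate_succ_apply' (noisyKoopman G F)] at hstep
    rw [Finset.sum_Icc_succ_top (by omega)]
    push_cast at hstep
    linear_combination ih + hstep

end NoisyKoopman

theorem stmt13_general (d : ℕ) (F : Torus d → Torus d)
    (hF : MeasurePreserving F volume volume)
    (L : ℝ≥0) (hFL : LipschitzWith L F)
    (G : (Torus d → ℂ) → (Torus d → ℂ))
    (C ε β : ℝ)
    (hGnoise : ∀ (h : Torus d → ℂ) (K : ℝ≥0), LipschitzWith K h →
      (eLpNorm (fun x => G h x - h x) 2 volume).toReal ≤ C * ε ^ β * K)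
    (hGlip : ∀ (h : Torus d → ℂ) (K : ℝ≥0), LipschitzWith K h →
      LipschitzWith K (G h))
    (f : Torus d → ℂ) (N : ℝ≥0) (hfl : LipschitzWith N f)
    (hfn : (eLpNorm f 2 volume).toReal = 1) (n : ℕ) :
    1 - C * ε ^ β * N * ∑ m ∈ Finset.Icc 1 n, (L : ℝ) ^ m ≤
      (eLpNorm ((fun h => G (h ∘ F))^[n] f) 2 volume).toReal := by
  have hloss := toReal_eLpNorm_iterate_noisyKoopman_ge one_le_two hF hFL hGnoise hGlip hfl n
  rw [hfn] at hloss
  exact hloss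

/-- Let F be a measure-preserving C¹ map of 𝕋^d (with `‖DF‖_∞ ≤ L`, i.e. F is
L-Lipschitz), `U_F f = f ∘ F` the Koopman operator, and G_ε a noise operator with
`‖G_ε h − h‖_{L²} ≤ C ε^β ‖∇h‖_∞` and `‖∇(G_ε h)‖_∞ ≤ ‖∇h‖_∞` on C¹ functions
(gradient sup-norms realized as Lipschitz constants).  Then for every mean-zero C¹
function f with ‖f‖_{L²} = 1 and `‖∇f‖_∞ ≤ N`,
`‖(G_ε U_F)^n f‖ ≥ 1 − C ε^β N Σ_{m=1}^n L^m` for all n. -/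
theorem stmt13 (d : ℕ) (F : Torus d → Torus d)
    (hF : MeasurePreserving F volume volume)
    (L : ℝ≥0) (hFL : LipschitzWith L F)
    (G : (Torus d → ℂ) → (Torus d → ℂ))
    (C ε β : ℝ) (hC : 0 < C) (hε : 0 < ε) (hβ : 0 < β)
    (hGnoise : ∀ (h : Torus d → ℂ) (K : ℝ≥0), LipschitzWith K h →
      (eLpNorm (fun x => G h x - h x) 2 volume).toReal ≤ C * ε ^ β * K)
    (hGlip : ∀ (h : Torus d → ℂ) (K : ℝ≥0), LipschitzWith K h →
      LipschitzWith K (G h))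
    (f : Torus d → ℂ) (N : ℝ≥0) (hfl : LipschitzWith N f)
    (hf0 : (∫ x, f x) = 0) (hfn : (eLpNorm f 2 volume).toReal = 1) (n : ℕ) :
    1 - C * ε ^ β * N * ∑ m ∈ Finset.Icc 1 n, (L : ℝ) ^ m ≤
      (eLpNorm ((fun h => G (h ∘ F))^[n] f) 2 volume).toReal :=
  stmt13_general d F hF L hFL G C ε β hGnoise hGlip f N hfl hfn n
end
end

section
/- Under the hypotheses of the previous estimate, if ‖DF‖_∞ = 1, then the noisy dissipation time satisfies τ(ε) ≥ (1 − e^{-1})/(C ‖∇f‖_∞ ε^β) for a suitable fixed test function f (e.g. f = e_{(1,0,…,0)}); i.e., τ(ε) ≳ ε^{-β}. -/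
/-!
Every iterate of `T h = G (h ∘ F)` is again `N`-Lipschitz, since `F` is `1`-Lipschitz and `G`
preserves Lipschitz constants. Composition with the measure-preserving `F` keeps the `L²` norm,
and one application of `G` moves an `N`-Lipschitz function by at most `C ε^β N` in `L²`, so
`‖T^n f‖₂ ≥ 1 - C ε^β N n`. Since `‖T^τ f‖₂ < e⁻¹`, this forces `C N ε^β τ > 1 - e⁻¹`.
-/

open MeasureTheory
open scoped NNReal

noncomputable section

lemma LipschitzWith.iterate_map_comp {X E : Type*} [PseudoEMetricSpace X] [PseudoEMetricSpace E]
    {K : ℝ≥0} {f : X → E} (hf : LipschitzWith K f) {F : X → X} {G : (X → E) → (X → E)}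
    (hF : LipschitzWith 1 F) (hG : ∀ h, LipschitzWith K h → LipschitzWith K (G h)) :
    ∀ n, LipschitzWith K ((fun h => G (h ∘ F))^[n] f)
  | 0 => hf
  | n + 1 => by
    rw [Function.iterate_succ_apply']
    exact hG _ (by simpa using (hf.iterate_map_comp hF hG n).comp hF)

lemma eLpNorm_toReal_le_add_eLpNorm_sub {α E : Type*} [MeasurableSpace α] {μ : Measure α}
    [NormedAddCommGroup E] {p : ENNReal} (hp : 1 ≤ p) {u v : α → E}
    (hu : MemLp u p μ) (hv : MemLp v p μ) :
    (eLpNorm v p μ).toReal ≤ (eLpNorm u p μ).toReal + (eLpNorm (u - v) p μ).toReal :=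
  ENNReal.toReal_le_add (by simpa using eLpNorm_sub_le hu.1 (hu.sub hv).1 hp) hu.2.ne
    (hu.sub hv).2.ne

section NoisyIteration

variable {X E : Type*} [PseudoMetricSpace X] [CompactSpace X] [MeasurableSpace X]
  [OpensMeasurableSpace X] {μ : Measure X} [IsFiniteMeasureOnCompacts μ]
  [NormedAddCommGroup E] {p : ENNReal} {K : ℝ≥0}

lemma LipschitzWith.memLp_of_compactSpace {h : X → E} (hh : LipschitzWith K h) : MemLp h p μ :=
  hh.continuous.memLp_of_hasCompactSupport (HasCompactSupport.of_compactSpace h)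

variable {F : X → X} {G : (X → E) → (X → E)} {δ : ℝ}

lemma eLpNorm_toReal_le_map_comp_add (hp : 1 ≤ p) (hF : MeasurePreserving F μ μ)
    (hFL : LipschitzWith 1 F) (hG : ∀ h, LipschitzWith K h → LipschitzWith K (G h))
    (hGnoise : ∀ h, LipschitzWith K h → (eLpNorm (fun x => G h x - h x) p μ).toReal ≤ δ)
    {g : X → E} (hg : LipschitzWith K g) :
    (eLpNorm g p μ).toReal ≤ (eLpNorm (G (g ∘ F)) p μ).toReal + δ := by
  have hgF : LipschitzWith K (g ∘ F) := by simpa using hg.comp hFL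
  calc (eLpNorm g p μ).toReal
      = (eLpNorm (g ∘ F) p μ).toReal := by
        rw [eLpNorm_comp_measurePreserving hg.continuous.aestronglyMeasurable hF]
    _ ≤ (eLpNorm (G (g ∘ F)) p μ).toReal
          + (eLpNorm (fun x => G (g ∘ F) x - (g ∘ F) x) p μ).toReal :=
        eLpNorm_toReal_le_add_eLpNorm_sub hp (hG _ hgF).memLp_of_compactSpace
          hgF.memLp_of_compactSpace
    _ ≤ (eLpNorm (G (g ∘ F)) p μ).toReal + δ := by gcongr; exact hGnoise _ hgF

lemma eLpNorm_toReal_sub_mul_le_iterate (hp : 1 ≤ p) (hF : MeasurePreserving F μ μ)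
    (hFL : LipschitzWith 1 F) (hG : ∀ h, LipschitzWith K h → LipschitzWith K (G h))
    (hGnoise : ∀ h, LipschitzWith K h → (eLpNorm (fun x => G h x - h x) p μ).toReal ≤ δ)
    {f : X → E} (hf : LipschitzWith K f) (n : ℕ) :
    (eLpNorm f p μ).toReal - n * δ ≤ (eLpNorm ((fun h => G (h ∘ F))^[n] f) p μ).toReal := by
  induction n with
  | zero => simp
  | succ n ih =>
    have hstep := eLpNorm_toReal_le_map_comp_add hp hF hFL hG hGnoise
      (hf.iterate_map_comp hFL hG n)
    rw [Function.iterate_succ_apply']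
    push_cast
    linarith

end NoisyIteration

theorem stmt14_general (d : ℕ) (F : Torus d → Torus d)
    (hF : MeasurePreserving F volume volume)
    (hFL : LipschitzWith 1 F)
    (G : (Torus d → ℂ) → (Torus d → ℂ))
    (C ε β : ℝ)
    (hGnoise : ∀ (h : Torus d → ℂ) (K : ℝ≥0), LipschitzWith K h →
      (eLpNorm (fun x => G h x - h x) 2 volume).toReal ≤ C * ε ^ β * K)
    (hGlip : ∀ (h : Torus d → ℂ) (K : ℝ≥0), LipschitzWith K h →
      LipschitzWith K (G h))
    (f : Torus d → ℂ) (N : ℝ≥0) (hfl : LipschitzWith N f)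
    (hfn : (eLpNorm f 2 volume).toReal = 1)
    (τ : ℕ)
    (hτ : (eLpNorm ((fun h => G (h ∘ F))^[τ] f) 2 volume).toReal < Real.exp (-1)) :
    (1 - Real.exp (-1)) / (C * N * ε ^ β) ≤ τ := by
  have hdecay := eLpNorm_toReal_sub_mul_le_iterate one_le_two hF hFL (fun h => hGlip h N)
    (fun h => hGnoise h N) hfl τ
  rw [hfn] at hdecay
  have hgap : 0 < 1 - Real.exp (-1) := sub_pos.2 (Real.exp_lt_one_iff.2 neg_one_lt_zero)
  have hlt : 1 - Real.exp (-1) < τ * (C * N * ε ^ β) := by linarith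
  have hden : 0 < C * N * ε ^ β := pos_of_mul_pos_right (hgap.trans hlt) τ.cast_nonneg
  rw [div_le_iff₀ hden]
  exact hlt.le

/-- Under the hypotheses of the lower-bound estimate (measure-preserving C¹ map F with
`‖DF‖_∞ = 1`, i.e. F 1-Lipschitz; noise operator G_ε with
`‖G_ε h − h‖_{L²} ≤ C ε^β ‖∇h‖_∞` and `‖∇(G_ε h)‖_∞ ≤ ‖∇h‖_∞`), for a fixed test
function f (mean-zero, ‖f‖_{L²} = 1, `‖∇f‖_∞ ≤ N`, N > 0) the noisy dissipation
time τ(ε) (any τ with `‖T_ε^τ f‖ < e⁻¹`) satisfies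
`τ(ε) ≥ (1 − e⁻¹)/(C N ε^β)`, i.e. τ(ε) ≳ ε^{−β}. -/
theorem stmt14 (d : ℕ) (F : Torus d → Torus d)
    (hF : MeasurePreserving F volume volume)
    (hFL : LipschitzWith 1 F)
    (G : (Torus d → ℂ) → (Torus d → ℂ))
    (C ε β : ℝ) (hC : 0 < C) (hε : 0 < ε) (hβ : 0 < β)
    (hGnoise : ∀ (h : Torus d → ℂ) (K : ℝ≥0), LipschitzWith K h →
      (eLpNorm (fun x => G h x - h x) 2 volume).toReal ≤ C * ε ^ β * K)
    (hGlip : ∀ (h : Torus d → ℂ) (K : ℝ≥0), LipschitzWith K h →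
      LipschitzWith K (G h))
    (f : Torus d → ℂ) (N : ℝ≥0) (hN : 0 < (N : ℝ)) (hfl : LipschitzWith N f)
    (hf0 : (∫ x, f x) = 0) (hfn : (eLpNorm f 2 volume).toReal = 1)
    (τ : ℕ)
    (hτ : (eLpNorm ((fun h => G (h ∘ F))^[τ] f) 2 volume).toReal < Real.exp (-1)) :
    (1 - Real.exp (-1)) / (C * N * ε ^ β) ≤ τ :=
  stmt14_general d F hF hFL G C ε β hGnoise hGlip f N hfl hfn τ hτ
end
end

section
/- Under the same hypotheses, if ‖DF‖_∞ = L > 1, then the noisy dissipation time satisfies τ(ε) ≥ (β/ln L)·ln(1/ε) + c for some constant c and all sufficiently small ε. -/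
open MeasureTheory
open scoped NNReal ENNReal

/-!
Each step `h ↦ G ε (h ∘ F)` multiplies the Lipschitz constant by at most `L` and, by the noise
bound, moves the `L²` norm by at most `C ε^β` times the current Lipschitz constant, while the
composition with `F` does not change the norm. Starting from a function of norm `1` and
Lipschitz constant `N`, after `n` steps the norm is therefore at least
`1 - C ε^β N (L + ⋯ + L^n) ≥ 1 - C ε^β N L^(n+1) / (L - 1)`. For the norm to drop below `e⁻¹ < 1/2`
we need `L^(n+1) > (L - 1) / (2 C N ε^β)`, and taking logarithms gives the bound on `τ(ε)`.
-/

theorem LipschitzWith.iterate_of_map_mul {X Y : Type*} [PseudoEMetricSpace X]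
    [PseudoEMetricSpace Y] {T : (X → Y) → X → Y} {L : ℝ≥0}
    (hT : ∀ (K : ℝ≥0) (g : X → Y), LipschitzWith K g → LipschitzWith (K * L) (T g))
    {N : ℝ≥0} {f : X → Y} (hf : LipschitzWith N f) (n : ℕ) :
    LipschitzWith (N * L ^ n) (T^[n] f) := by
  induction n with
  | zero => simpa using hf
  | succ n ih =>
    rw [Function.iterate_succ_apply', pow_succ, ← mul_assoc]
    exact hT _ _ ih

theorem toReal_eLpNorm_le_add_toReal_eLpNorm_sub {α E : Type*} {m : MeasurableSpace α}
    {μ : Measure α} [NormedAddCommGroup E] {p : ℝ≥0∞} (hp : 1 ≤ p) {u v : α → E}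
    (hu : MemLp u p μ) (hv : MemLp v p μ) :
    (eLpNorm u p μ).toReal ≤ (eLpNorm v p μ).toReal + (eLpNorm (v - u) p μ).toReal := by
  rw [← ENNReal.toReal_add hv.eLpNorm_ne_top (hv.sub hu).eLpNorm_ne_top]
  refine ENNReal.toReal_mono
    (ENNReal.add_ne_top.mpr ⟨hv.eLpNorm_ne_top, (hv.sub hu).eLpNorm_ne_top⟩) ?_
  simpa only [sub_sub_cancel] using
    eLpNorm_sub_le hv.aestronglyMeasurable (hv.sub hu).aestronglyMeasurable hp

theorem sub_mul_pow_succ_div_le_of_forall {a : ℕ → ℝ} {δ L : ℝ} (hδ : 0 ≤ δ) (hL : 1 < L)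
    (h : ∀ n, a n - δ * L ^ (n + 1) ≤ a (n + 1)) (n : ℕ) :
    a 0 - δ * L ^ (n + 1) / (L - 1) ≤ a n := by
  have hL1 : 0 < L - 1 := sub_pos.mpr hL
  -- `(L^(n+1) - L) / (L - 1) = L + ⋯ + L^n`
  have telescoped : ∀ n, a 0 - δ * (L ^ (n + 1) - L) / (L - 1) ≤ a n := by
    intro n
    induction n with
    | zero => simp
    | succ n ih =>
      have : δ * (L ^ (n + 1 + 1) - L) / (L - 1) = δ * (L ^ (n + 1) - L) / (L - 1)
          + δ * L ^ (n + 1) := by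
        field_simp; ring
      linarith [h n]
  calc a 0 - δ * L ^ (n + 1) / (L - 1) ≤ a 0 - δ * (L ^ (n + 1) - L) / (L - 1) := by
        gcongr; linarith
    _ ≤ a n := telescoped n

theorem Real.log_div_log_lt_of_lt_pow {L x : ℝ} {n : ℕ} (hL : 1 < L) (hx : 0 < x)
    (h : x < L ^ n) : Real.log x / Real.log L < n := by
  rw [div_lt_iff₀ (Real.log_pos hL), ← Real.log_pow]
  exact Real.log_lt_log hx h

theorem div_log_mul_log_one_div_add_le_of_half_lt {L C N ε β : ℝ} {n : ℕ} (hL : 1 < L)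
    (hC : 0 < C) (hN : 0 < N) (hε : 0 < ε)
    (h : 1 / 2 < C * ε ^ β * N * L ^ (n + 1) / (L - 1)) :
    β / Real.log L * Real.log (1 / ε) + (Real.log ((L - 1) / (2 * C * N)) / Real.log L - 1)
      ≤ n := by
  have escape : (L - 1) / (2 * C * N * ε ^ β) < L ^ (n + 1) := by
    rw [lt_div_iff₀ (sub_pos.mpr hL)] at h
    rw [div_lt_iff₀ (by positivity)]
    linarith
  have hlog : Real.log ((L - 1) / (2 * C * N * ε ^ β))
      = Real.log ((L - 1) / (2 * C * N)) + β * Real.log (1 / ε) := by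
    rw [← div_div, Real.log_div (div_pos (sub_pos.mpr hL) (by positivity)).ne' (by positivity),
      Real.log_rpow hε, one_div, Real.log_inv]
    ring
  have := Real.log_div_log_lt_of_lt_pow hL (by positivity) escape
  rw [hlog, add_div, Nat.cast_succ] at this
  rw [div_mul_eq_mul_div]
  linarith

theorem stmt15_general (d : ℕ) (F : Torus d → Torus d)
    (hF : MeasurePreserving F volume volume)
    (L : ℝ≥0) (hL : 1 < (L : ℝ)) (hFL : LipschitzWith L F)
    (G : ℝ → (Torus d → ℂ) → (Torus d → ℂ))
    (C β : ℝ) (hC : 0 < C)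
    (hGnoise : ∀ ε : ℝ, 0 < ε → ∀ (h : Torus d → ℂ) (K : ℝ≥0), LipschitzWith K h →
      (eLpNorm (fun x => G ε h x - h x) 2 volume).toReal ≤ C * ε ^ β * K)
    (hGlip : ∀ ε : ℝ, 0 < ε → ∀ (h : Torus d → ℂ) (K : ℝ≥0), LipschitzWith K h →
      LipschitzWith K (G ε h))
    (f : Torus d → ℂ) (N : ℝ≥0) (hN : 0 < (N : ℝ)) (hfl : LipschitzWith N f)
    (hfn : (eLpNorm f 2 volume).toReal = 1)
    (τ : ℝ → ℕ)
    (hτ : ∀ ε : ℝ, 0 < ε →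
      (eLpNorm ((fun h => G ε (h ∘ F))^[τ ε] f) 2 volume).toReal < Real.exp (-1)) :
    ∃ c ε₀ : ℝ, 0 < ε₀ ∧ ∀ ε : ℝ, 0 < ε → ε < ε₀ →
      (β / Real.log L) * Real.log (1 / ε) + c ≤ τ ε := by
  refine ⟨Real.log ((L - 1) / (2 * C * N)) / Real.log L - 1, 1, one_pos, fun ε hε _ => ?_⟩
  set T : (Torus d → ℂ) → Torus d → ℂ := fun h => G ε (h ∘ F)
  have memLp : ∀ (K : ℝ≥0) (g : Torus d → ℂ), LipschitzWith K g → MemLp g 2 volume :=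
    fun _ _ hg => hg.continuous.memLp_of_hasCompactSupport (.of_compactSpace _)
  have lip : ∀ n, LipschitzWith (N * L ^ n) (T^[n] f) :=
    LipschitzWith.iterate_of_map_mul (fun K g hg => hGlip ε hε _ _ (hg.comp hFL)) hfl
  have step : ∀ n, (eLpNorm (T^[n] f) 2 volume).toReal - C * ε ^ β * N * L ^ (n + 1)
      ≤ (eLpNorm (T^[n + 1] f) 2 volume).toReal := by
    intro n
    have hlipF := (lip n).comp hFL
    have noise : (eLpNorm (T (T^[n] f) - T^[n] f ∘ F) 2 volume).toReal
        ≤ C * ε ^ β * N * L ^ (n + 1) :=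
      (hGnoise ε hε _ _ hlipF).trans_eq (by push_cast; ring)
    have tri := toReal_eLpNorm_le_add_toReal_eLpNorm_sub one_le_two (memLp _ _ hlipF)
      (memLp _ _ (hGlip ε hε _ _ hlipF))
    rw [eLpNorm_comp_measurePreserving (memLp _ _ (lip n)).aestronglyMeasurable hF] at tri
    rw [Function.iterate_succ_apply']
    linarith
  have lower := sub_mul_pow_succ_div_le_of_forall (by positivity) hL step (τ ε)
  rw [Function.iterate_zero_apply, hfn] at lower
  exact div_log_mul_log_one_div_add_le_of_half_lt hL hC hN hε
    (by linarith [hτ ε hε, Real.exp_neg_one_lt_half])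

/-- Under the same hypotheses, if `‖DF‖_∞ = L > 1` (F L-Lipschitz with L > 1), then
the noisy dissipation time satisfies `τ(ε) ≥ (β/ln L) ln(1/ε) + c` for some constant
c and all sufficiently small ε > 0. -/
theorem stmt15 (d : ℕ) (F : Torus d → Torus d)
    (hF : MeasurePreserving F volume volume)
    (L : ℝ≥0) (hL : 1 < (L : ℝ)) (hFL : LipschitzWith L F)
    (G : ℝ → (Torus d → ℂ) → (Torus d → ℂ))
    (C β : ℝ) (hC : 0 < C) (hβ : 0 < β)
    (hGnoise : ∀ ε : ℝ, 0 < ε → ∀ (h : Torus d → ℂ) (K : ℝ≥0), LipschitzWith K h →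
      (eLpNorm (fun x => G ε h x - h x) 2 volume).toReal ≤ C * ε ^ β * K)
    (hGlip : ∀ ε : ℝ, 0 < ε → ∀ (h : Torus d → ℂ) (K : ℝ≥0), LipschitzWith K h →
      LipschitzWith K (G ε h))
    (f : Torus d → ℂ) (N : ℝ≥0) (hN : 0 < (N : ℝ)) (hfl : LipschitzWith N f)
    (hf0 : (∫ x, f x) = 0) (hfn : (eLpNorm f 2 volume).toReal = 1)
    (τ : ℝ → ℕ)
    (hτ : ∀ ε : ℝ, 0 < ε →
      (eLpNorm ((fun h => G ε (h ∘ F))^[τ ε] f) 2 volume).toReal < Real.exp (-1)) :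
    ∃ c ε₀ : ℝ, 0 < ε₀ ∧ ∀ ε : ℝ, 0 < ε → ε < ε₀ →
      (β / Real.log L) * Real.log (1 / ε) + c ≤ τ ε :=
  stmt15_general d F hF L hL hFL G C β hC hGnoise hGlip f N hN hfl hfn τ hτ
end

section
/- Let F(x) = 2x mod 1 on 𝕋¹ and let the noise be given by ĝ(ξ) = e^{−|ξ|^α} for some α ∈ (0,2]. Then for every n ≥ 1, the noisy propagator T_ε = G_ε U_F on L²₀(𝕋¹) satisfies ‖T_ε^n‖ = exp(−ε^α (2^{nα} − 1)/(1 − 2^{−α})), and the coarse-grained propagator satisfies ‖G_ε U_F^n G_ε‖ = exp(−ε^α (2^{nα} + 1)). Consequently both dissipation times equal (1/ln 2)·ln(1/ε) + O(1) as ε → 0. -/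
open Filter Asymptotics
open scoped Topology

noncomputable section

/-- Nonzero integer frequencies. -/
abbrev NZ1 := {k : ℤ // k ≠ 0}

/-- Model of `L²₀(𝕋¹)` via Fourier coefficients on nonzero frequencies; the Fourier
mode `e_k` is `lp.single 2 k 1`. -/
abbrev H1 := lp (fun _ : NZ1 => ℂ) 2

/-!
Both operators are weighted shifts in the Fourier basis: `e_k ↦ w_k e_{2ⁿk}` with
`w_k = exp (-a |εk|^α)`, where `a = 2^α + ⋯ + 2^{nα}` for `T_ε^n` and `a = 2^{nα} + 1` for
`G_ε U^n G_ε`. A weighted shift along an injective index map has norm `sup_k |w_k|`, attained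
at `k = ±1`, which gives the two formulas. The dissipation time is then the least `n` with
`ε^α 2^{nα} > y(ε)`, where `y(ε)` tends to a positive limit (`1 - 2^{-α}`, resp. `1`), i.e.
`⌊log₂ (y/ε^α) / α⌋ + 1 = log₂ (1/ε) + O(1)`.
-/

open scoped ENNReal

namespace lp

variable {ι 𝕜 : Type*} [NontriviallyNormedField 𝕜] {p : ℝ≥0∞} [Fact (1 ≤ p)]

lemma norm_le_of_comp_injective (hp : p ≠ ∞) {σ : ι → ι} (hσ : σ.Injective)
    {f g : lp (fun _ : ι => 𝕜) p} {W : ℝ} (hW : 0 ≤ W) (hg : ∀ m ∉ Set.range σ, g m = 0)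
    (hgf : ∀ k, ‖g (σ k)‖ ≤ W * ‖f k‖) : ‖g‖ ≤ W * ‖f‖ := by
  replace hp : 0 < p.toReal := ENNReal.toReal_pos (zero_lt_one.trans_le Fact.out).ne' hp
  have hg_sum : HasSum (fun k => ‖g (σ k)‖ ^ p.toReal) (‖g‖ ^ p.toReal) := by
    refine (hσ.hasSum_iff fun m hm => ?_).2 (hasSum_norm hp g)
    simp [hg m hm, Real.zero_rpow hp.ne']
  have := hasSum_le (fun k => ?_) hg_sum ((hasSum_norm hp f).mul_left (W ^ p.toReal))
  · rwa [← Real.mul_rpow hW (norm_nonneg _), Real.rpow_le_rpow_iff (norm_nonneg _)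
      (by positivity) hp] at this
  · rw [← Real.mul_rpow hW (norm_nonneg _)]
    exact Real.rpow_le_rpow (norm_nonneg _) (hgf k) hp.le

variable [DecidableEq ι] (hp : p ≠ ∞) {σ : ι → ι} {w : ι → 𝕜}
  {A : lp (fun _ : ι => 𝕜) p →L[𝕜] lp (fun _ : ι => 𝕜) p}
  (hA : ∀ k c, A (lp.single p k c) = lp.single p (σ k) (w k * c))
include hp hA

lemma hasSum_apply_of_map_single (f : lp (fun _ : ι => 𝕜) p) (m : ι) :
    HasSum (fun k => if m = σ k then w k * f k else 0) (A f m) := by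
  have := ((lp.hasSum_single hp f).mapL A).mapL (evalCLM 𝕜 _ p m)
  simpa [hA, evalCLM, lp.single_apply, Pi.single_apply] using this

lemma apply_comp_of_map_single (hσ : σ.Injective) (f : lp (fun _ : ι => 𝕜) p) (k : ι) :
    A f (σ k) = w k * f k := by
  refine (hasSum_apply_of_map_single hp hA f (σ k)).unique
    (hasSum_single k fun k' hk' => ?_) |>.trans ?_
  · simp [hσ.ne hk'.symm]
  · simp

lemma apply_eq_zero_of_map_single (f : lp (fun _ : ι => 𝕜) p) {m : ι}
    (hm : m ∉ Set.range σ) : A f m = 0 := by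
  refine (hasSum_apply_of_map_single hp hA f m).unique ?_
  convert hasSum_zero with k
  exact if_neg fun h => hm ⟨k, h.symm⟩

theorem opNorm_eq_of_map_single (hσ : σ.Injective) {k₀ : ι} (hk₀ : ∀ k, ‖w k‖ ≤ ‖w k₀‖) :
    ‖A‖ = ‖w k₀‖ := by
  refine le_antisymm (A.opNorm_le_bound (norm_nonneg _) fun f => ?_) ?_
  · refine norm_le_of_comp_injective hp hσ (norm_nonneg _)
      (fun m hm => apply_eq_zero_of_map_single hp hA f hm) fun k => ?_
    rw [apply_comp_of_map_single hp hA hσ, norm_mul]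
    exact mul_le_mul_of_nonneg_right (hk₀ k) (norm_nonneg _)
  · simpa [hA, lp.norm_single (zero_lt_one.trans_le Fact.out)] using
      A.le_opNorm (lp.single p k₀ 1)

end lp

lemma Nat.sInf_setOf_lt_cast {x : ℝ} (hx : 0 ≤ x) : sInf {n : ℕ | x < n} = ⌊x⌋₊ + 1 :=
  le_antisymm (Nat.sInf_le (by simpa using Nat.lt_floor_add_one x))
    (le_csInf ⟨⌊x⌋₊ + 1, by simpa using Nat.lt_floor_add_one x⟩ fun _ => (Nat.floor_lt hx).2)

lemma abs_sInf_setOf_lt_cast_sub_le {x : ℝ} (hx : 0 ≤ x) :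
    |((sInf {n : ℕ | x < n} : ℕ) : ℝ) - x| ≤ 1 := by
  rw [Nat.sInf_setOf_lt_cast hx, abs_le]
  push_cast
  constructor <;> linarith [Nat.floor_le hx, Nat.lt_floor_add_one x]

lemma lt_mul_two_rpow_iff {α a y : ℝ} (hα : 0 < α) (ha : 0 < a) (hy : 0 < y) (n : ℕ) :
    y < a * 2 ^ ((n : ℝ) * α) ↔ Real.logb 2 (y / a) / α < n := by
  rw [div_lt_iff₀ hα, Real.logb_lt_iff_lt_rpow one_lt_two (div_pos hy ha), div_lt_iff₀' ha]

lemma tendsto_rpow_nhdsGT_zero {α : ℝ} (hα : 0 < α) :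
    Tendsto (fun ε : ℝ => ε ^ α) (𝓝[>] 0) (𝓝 0) := by
  simpa [Real.zero_rpow hα.ne'] using
    (Real.continuousAt_rpow_const 0 α (Or.inr hα.le)).tendsto.mono_left nhdsWithin_le_nhds

theorem isBigO_sInf_lt_rpow_mul_two_rpow_sub_logb {α c : ℝ} (hα : 0 < α) (hc : 0 < c)
    {y : ℝ → ℝ} (hy : Tendsto y (𝓝[>] 0) (𝓝 c)) :
    (fun ε : ℝ => ((sInf {n : ℕ | y ε < ε ^ α * 2 ^ ((n : ℝ) * α)} : ℕ) : ℝ)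
        - Real.log (1 / ε) / Real.log 2) =O[𝓝[>] 0] fun _ => (1 : ℝ) := by
  have h_le : ∀ᶠ ε in 𝓝[>] (0 : ℝ), 0 < ε ∧ ε ^ α < y ε :=
    eventually_mem_nhdsWithin.and <| ((hy.sub (tendsto_rpow_nhdsGT_zero hα)).eventually
      (lt_mem_nhds (by simpa using hc))).mono fun _ => sub_pos.1
  set x : ℝ → ℝ := fun ε => Real.logb 2 (y ε / ε ^ α) / α
  have h_floor : (fun ε => ((sInf {n : ℕ | y ε < ε ^ α * 2 ^ ((n : ℝ) * α)} : ℕ) : ℝ) - x ε)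
      =O[𝓝[>] 0] fun _ => (1 : ℝ) := by
    refine IsBigO.of_bound 1 (h_le.mono fun ε ⟨hε, hεy⟩ => ?_)
    have hεα := Real.rpow_pos_of_pos hε α
    have hx : 0 ≤ x ε :=
      div_nonneg (Real.logb_nonneg one_lt_two ((one_le_div hεα).2 hεy.le)) hα.le
    simpa [lt_mul_two_rpow_iff hα hεα (hεα.trans hεy)] using abs_sInf_setOf_lt_cast_sub_le hx
  have h_log : (fun ε => x ε - Real.log (1 / ε) / Real.log 2) =O[𝓝[>] 0] fun _ => (1 : ℝ) := by
    refine ((hy.log hc.ne').div_const (α * Real.log 2)).isBigO_one ℝ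
      |>.congr' ?_ EventuallyEq.rfl
    filter_upwards [h_le] with ε ⟨hε, hεy⟩
    have hεα := Real.rpow_pos_of_pos hε α
    simp only [x, Real.logb, Real.log_div (hεα.trans hεy).ne' hεα.ne', Real.log_rpow hε, one_div,
      Real.log_inv]
    field_simp
    ring
  exact (h_floor.add h_log).congr_left fun ε => by ring

lemma two_rpow_pow (α : ℝ) (n : ℕ) : ((2 : ℝ) ^ α) ^ n = 2 ^ ((n : ℝ) * α) := by
  rw [← Real.rpow_mul_natCast zero_le_two, mul_comm]

lemma abs_two_pow_mul_rpow (α x : ℝ) (n : ℕ) :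
    |(2 : ℝ) ^ n * x| ^ α = ((2 : ℝ) ^ α) ^ n * |x| ^ α := by
  rw [abs_mul, abs_pow, abs_two, Real.mul_rpow (by positivity) (abs_nonneg x),
    ← Real.rpow_natCast, ← Real.rpow_mul zero_le_two, two_rpow_pow, mul_comm]

lemma sum_range_two_rpow_pow_succ {α : ℝ} (hα : 0 < α) (n : ℕ) :
    ∑ j ∈ Finset.range n, ((2 : ℝ) ^ α) ^ (j + 1)
      = (2 ^ ((n : ℝ) * α) - 1) / (1 - 2 ^ (-α)) := by
  have hr : 1 < (2 : ℝ) ^ α := Real.one_lt_rpow one_lt_two hα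
  simp_rw [pow_succ, ← Finset.sum_mul, geom_sum_eq hr.ne', two_rpow_pow,
    Real.rpow_neg zero_le_two]
  have : (2 : ℝ) ^ α - 1 ≠ 0 := sub_ne_zero.2 hr.ne'
  field_simp

def mulTwoPow (n : ℕ) (k : NZ1) : NZ1 :=
  ⟨2 ^ n * k.1, mul_ne_zero (pow_ne_zero n two_ne_zero) k.2⟩

lemma mulTwoPow_injective (n : ℕ) : (mulTwoPow n).Injective := fun _ _ h =>
  Subtype.ext <| mul_left_cancel₀ (pow_ne_zero n two_ne_zero) (congrArg Subtype.val h)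

lemma mk_two_mul_mulTwoPow (n : ℕ) (k : NZ1) (h : 2 * (mulTwoPow n k).1 ≠ 0) :
    (⟨2 * (mulTwoPow n k).1, h⟩ : NZ1) = mulTwoPow (n + 1) k :=
  Subtype.ext <| by simp [mulTwoPow, pow_succ]; ring

lemma abs_mul_mulTwoPow_rpow (α ε : ℝ) (n : ℕ) (k : NZ1) :
    |ε * ((mulTwoPow n k).1 : ℝ)| ^ α = ((2 : ℝ) ^ α) ^ n * |ε * k.1| ^ α := by
  rw [← abs_two_pow_mul_rpow]
  simp [mulTwoPow, mul_left_comm]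

lemma norm_eq_exp_of_map_single {α ε a : ℝ} (hα : 0 < α) (hε : 0 < ε) (ha : 0 ≤ a) {n : ℕ}
    {A : H1 →L[ℂ] H1} (hA : ∀ k c, A (lp.single 2 k c)
      = lp.single 2 (mulTwoPow n k) ((Real.exp (-(a * |ε * k.1| ^ α)) : ℂ) * c)) :
    ‖A‖ = Real.exp (-(a * ε ^ α)) := by
  have hk : ∀ k : NZ1, ε ≤ |ε * k.1| := fun k => by
    rw [abs_mul, abs_of_pos hε]
    exact le_mul_of_one_le_right hε.le (by exact_mod_cast Int.one_le_abs k.2)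
  rw [lp.opNorm_eq_of_map_single ENNReal.ofNat_ne_top hA (mulTwoPow_injective n)
    (k₀ := ⟨1, one_ne_zero⟩)]
  · rw [Complex.norm_real, Real.norm_of_nonneg (Real.exp_pos _).le]
    norm_num [abs_of_pos hε]
  · intro k
    simp only [Complex.norm_real, Real.norm_eq_abs, Real.abs_exp, Real.exp_le_exp,
      neg_le_neg_iff]
    refine mul_le_mul_of_nonneg_left (Real.rpow_le_rpow (abs_nonneg _) ?_ hα.le) ha
    simpa [abs_of_pos hε] using hk k

section DoublingMap

variable {α : ℝ} (U : H1 →L[ℂ] H1)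
  (hU : ∀ (k : NZ1) (c : ℂ),
    U (lp.single 2 k c) = lp.single 2 ⟨2 * k.1, mul_ne_zero two_ne_zero k.2⟩ c)
  (G : ℝ → (H1 →L[ℂ] H1))
  (hG : ∀ ε : ℝ, 0 < ε → ∀ (f : H1) (k : NZ1),
    (G ε f : ∀ _ : NZ1, ℂ) k
      = (Real.exp (-(|ε * (k.1 : ℝ)| ^ α)) : ℝ) * (f : ∀ _ : NZ1, ℂ) k)

include hU in
lemma pow_apply_single (n : ℕ) (k : NZ1) (c : ℂ) :
    (U ^ n) (lp.single 2 k c) = lp.single 2 (mulTwoPow n k) c := by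
  induction n with
  | zero => simp [mulTwoPow]
  | succ n ih =>
    rw [pow_succ', mul_apply_eq_comp, ih, hU, mk_two_mul_mulTwoPow]

include hG in
lemma noise_apply_single {ε : ℝ} (hε : 0 < ε) (k : NZ1) (c : ℂ) :
    G ε (lp.single 2 k c) = lp.single 2 k ((Real.exp (-(|ε * k.1| ^ α)) : ℂ) * c) := by
  ext m
  rw [hG ε hε, lp.single_apply, lp.single_apply, Pi.single_apply, Pi.single_apply]
  split_ifs with h <;> simp [h]

include hU hG in
lemma noisy_pow_apply_single {ε : ℝ} (hε : 0 < ε) (n : ℕ) (k : NZ1) (c : ℂ) :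
    ((G ε).comp U ^ n) (lp.single 2 k c) = lp.single 2 (mulTwoPow n k)
      ((Real.exp (-((∑ j ∈ Finset.range n, ((2 : ℝ) ^ α) ^ (j + 1)) * |ε * k.1| ^ α)) : ℂ)
        * c) := by
  induction n with
  | zero => simp [mulTwoPow]
  | succ n ih =>
    rw [pow_succ', mul_apply_eq_comp, ih, ContinuousLinearMap.comp_apply, hU,
      noise_apply_single G hG hε, mk_two_mul_mulTwoPow, abs_mul_mulTwoPow_rpow, ← mul_assoc,
      ← Complex.ofReal_mul, ← Real.exp_add, Finset.sum_range_succ]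
    congr 4
    ring

include hU hG in
lemma coarseGrained_apply_single {ε : ℝ} (hε : 0 < ε) (n : ℕ) (k : NZ1) (c : ℂ) :
    (G ε).comp ((U ^ n).comp (G ε)) (lp.single 2 k c) = lp.single 2 (mulTwoPow n k)
      ((Real.exp (-((((2 : ℝ) ^ α) ^ n + 1) * |ε * k.1| ^ α)) : ℂ) * c) := by
  simp only [ContinuousLinearMap.comp_apply]
  rw [noise_apply_single G hG hε, pow_apply_single U hU, noise_apply_single G hG hε,
    abs_mul_mulTwoPow_rpow, ← mul_assoc, ← Complex.ofReal_mul, ← Real.exp_add]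
  congr 4
  ring

include hU hG in
lemma norm_noisy_pow (hα : 0 < α) ⦃ε : ℝ⦄ (hε : 0 < ε) (n : ℕ) : ‖(G ε).comp U ^ n‖
    = Real.exp (-(ε ^ α * ((2 : ℝ) ^ ((n : ℝ) * α) - 1) / (1 - (2 : ℝ) ^ (-α)))) := by
  rw [norm_eq_exp_of_map_single hα hε (by positivity) (noisy_pow_apply_single U hU G hG hε n),
    sum_range_two_rpow_pow_succ hα]
  congr 1
  ring

include hU hG in
lemma norm_coarseGrained (hα : 0 < α) ⦃ε : ℝ⦄ (hε : 0 < ε) (n : ℕ) :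
    ‖(G ε).comp ((U ^ n).comp (G ε))‖ = Real.exp (-(ε ^ α * ((2 : ℝ) ^ ((n : ℝ) * α) + 1))) := by
  rw [norm_eq_exp_of_map_single hα hε (by positivity) (coarseGrained_apply_single U hU G hG hε n),
    two_rpow_pow, mul_comm]

end DoublingMap

theorem stmt18_general (α : ℝ) (hα : 0 < α)
    (U : H1 →L[ℂ] H1)
    (hU : ∀ (k : NZ1) (c : ℂ),
      U (lp.single 2 k c) = lp.single 2 ⟨2 * k.1, mul_ne_zero two_ne_zero k.2⟩ c)
    (G : ℝ → (H1 →L[ℂ] H1))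
    (hG : ∀ ε : ℝ, 0 < ε → ∀ (f : H1) (k : NZ1),
      (G ε f : ∀ _ : NZ1, ℂ) k
        = (Real.exp (-(|ε * (k.1 : ℝ)| ^ α)) : ℝ) * (f : ∀ _ : NZ1, ℂ) k) :
    (∀ ε : ℝ, 0 < ε → ∀ n : ℕ, 1 ≤ n →
      ‖((G ε).comp U) ^ n‖ =
        Real.exp (-(ε ^ α * ((2 : ℝ) ^ ((n : ℝ) * α) - 1) / (1 - (2 : ℝ) ^ (-α))))) ∧
    (∀ ε : ℝ, 0 < ε → ∀ n : ℕ, 1 ≤ n →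
      ‖(G ε).comp ((U ^ n).comp (G ε))‖ =
        Real.exp (-(ε ^ α * ((2 : ℝ) ^ ((n : ℝ) * α) + 1)))) ∧
    ((fun ε : ℝ =>
        ((sInf {n : ℕ | ‖((G ε).comp U) ^ n‖ < Real.exp (-1)} : ℕ) : ℝ)
          - Real.log (1 / ε) / Real.log 2)
      =O[𝓝[>] (0 : ℝ)] fun _ : ℝ => (1 : ℝ)) ∧
    ((fun ε : ℝ =>
        ((sInf {n : ℕ | ‖(G ε).comp ((U ^ n).comp (G ε))‖ < Real.exp (-1)} : ℕ) : ℝ)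
          - Real.log (1 / ε) / Real.log 2)
      =O[𝓝[>] (0 : ℝ)] fun _ : ℝ => (1 : ℝ)) := by
  have hd : 0 < 1 - (2 : ℝ) ^ (-α) :=
    sub_pos.2 (Real.rpow_lt_one_of_one_lt_of_neg one_lt_two (neg_lt_zero.2 hα))
  have hT := norm_noisy_pow U hU G hG hα
  have hC := norm_coarseGrained U hU G hG hα
  refine ⟨fun ε hε n _ => hT hε n, fun ε hε n _ => hC hε n, ?_, ?_⟩
  · have hy : Tendsto (fun ε : ℝ => ε ^ α + (1 - 2 ^ (-α))) (𝓝[>] 0) (𝓝 (1 - 2 ^ (-α))) := by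
      simpa using (tendsto_rpow_nhdsGT_zero hα).add_const (1 - (2 : ℝ) ^ (-α))
    refine (isBigO_sInf_lt_rpow_mul_two_rpow_sub_logb hα hd hy).congr' ?_ EventuallyEq.rfl
    filter_upwards [self_mem_nhdsWithin] with ε (hε : 0 < ε)
    congr 3
    ext n
    rw [Set.mem_ofPred_eq, Set.mem_ofPred_eq, hT hε, Real.exp_lt_exp, neg_lt_neg_iff,
      lt_div_iff₀ hd]
    constructor <;> intro h <;> linarith
  · have hy : Tendsto (fun ε : ℝ => 1 - ε ^ α) (𝓝[>] 0) (𝓝 1) := by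
      simpa using (tendsto_rpow_nhdsGT_zero hα).const_sub 1
    refine (isBigO_sInf_lt_rpow_mul_two_rpow_sub_logb hα one_pos hy).congr' ?_ EventuallyEq.rfl
    filter_upwards [self_mem_nhdsWithin] with ε (hε : 0 < ε)
    congr 3
    ext n
    rw [Set.mem_ofPred_eq, Set.mem_ofPred_eq, hC hε, Real.exp_lt_exp, neg_lt_neg_iff]
    constructor <;> intro h <;> linarith

/-- The doubling map `F(x) = 2x mod 1` on 𝕋¹ with α-stable noise `ĝ(ξ) = e^{−|ξ|^α}`:
the Koopman operator sends `e_k ↦ e_{2k}` and `G_ε` multiplies the k-th coefficient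
by `e^{−|εk|^α}`.  Then `‖T_ε^n‖ = exp(−ε^α (2^{nα} − 1)/(1 − 2^{−α}))` and
`‖G_ε U^n G_ε‖ = exp(−ε^α (2^{nα} + 1))` for n ≥ 1, and consequently both
dissipation times equal `(1/ln 2) ln(1/ε) + O(1)` as ε → 0⁺. -/
theorem stmt18 (α : ℝ) (hα : 0 < α) (hα2 : α ≤ 2)
    (U : H1 →L[ℂ] H1)
    (hU : ∀ (k : NZ1) (c : ℂ),
      U (lp.single 2 k c) = lp.single 2 ⟨2 * k.1, mul_ne_zero two_ne_zero k.2⟩ c)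
    (G : ℝ → (H1 →L[ℂ] H1))
    (hG : ∀ ε : ℝ, 0 < ε → ∀ (f : H1) (k : NZ1),
      (G ε f : ∀ _ : NZ1, ℂ) k
        = (Real.exp (-(|ε * (k.1 : ℝ)| ^ α)) : ℝ) * (f : ∀ _ : NZ1, ℂ) k) :
    (∀ ε : ℝ, 0 < ε → ∀ n : ℕ, 1 ≤ n →
      ‖((G ε).comp U) ^ n‖ =
        Real.exp (-(ε ^ α * ((2 : ℝ) ^ ((n : ℝ) * α) - 1) / (1 - (2 : ℝ) ^ (-α))))) ∧
    (∀ ε : ℝ, 0 < ε → ∀ n : ℕ, 1 ≤ n →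
      ‖(G ε).comp ((U ^ n).comp (G ε))‖ =
        Real.exp (-(ε ^ α * ((2 : ℝ) ^ ((n : ℝ) * α) + 1)))) ∧
    ((fun ε : ℝ =>
        ((sInf {n : ℕ | ‖((G ε).comp U) ^ n‖ < Real.exp (-1)} : ℕ) : ℝ)
          - Real.log (1 / ε) / Real.log 2)
      =O[𝓝[>] (0 : ℝ)] fun _ : ℝ => (1 : ℝ)) ∧
    ((fun ε : ℝ =>
        ((sInf {n : ℕ | ‖(G ε).comp ((U ^ n).comp (G ε))‖ < Real.exp (-1)} : ℕ) : ℝ)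
          - Real.log (1 / ε) / Real.log 2)
      =O[𝓝[>] (0 : ℝ)] fun _ : ℝ => (1 : ℝ)) :=
  stmt18_general α hα U hU G hG
end
end
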